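/- arXiv:2502.10532 — 2 statements merged into one kernel-verified Lean document; each statement's English description precedes it below -/
import Mathlib

section
/- (Theorem 1, in-probability form.) Let (Ω, 𝔉, μ) be a probability space. For each n ∈ ℕ let p_n ∈ ℕ, let S*_n be a configuration of {0,...,p_n−1}, let ω ↦ π_n^ω be a family of probability mass functions on the 2^{p_n} configurations with π_n^ω(S) > 0 for all S and ω, such that ω ↦ π_n^ω(S*_n) is measurable, and let ω ↦ φ̂_n(ω) ∈ [0,1]^{p_n} be such that for every ω, φ̂_n(ω) minimizes φ ↦ KL(q_φ ∥ π_n^ω) over [0,1]^{p_n}, with ω ↦ q_{φ̂_n(ω)}(S*_n) measurable. If the random variables π_n^ω(S*_n) converge to 1 in μ-measure as n → ∞, then the random variables q_{φ̂_n(ω)}(S*_n) converge to 1 in μ-measure as n → ∞. -/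
/-!
Testing the minimizer against the point mass at `S*` (the product measure with `φ = 𝟙_{S*}`)
gives `KL(q ∥ π) ≤ -log π(S*)` for `q = q_φ̂`. Merging all configurations other than `S*` into
one block (log-sum inequality) bounds `KL(q ∥ π)` below by the binary divergence between
`(q(S*), 1 - q(S*))` and `(π(S*), 1 - π(S*))`, and `x log x ≥ -1` then yields
`(1 - q(S*)) · (-log (1 - π(S*))) ≤ 2 - log π(S*)`. When `π(S*)` is close to `1` the right side is
bounded while `-log (1 - π(S*))` is huge, uniformly in `n` and `ω`, so `q(S*)` is close to `1`
wherever `π(S*)` is, and convergence in measure transfers.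
-/

open Finset Filter MeasureTheory

/-- Product-Bernoulli mass function on configurations `S ⊆ {0,…,p-1}`. -/
noncomputable def bernoulliMass {p : ℕ} (φ : Fin p → ℝ) (S : Finset (Fin p)) : ℝ :=
  (∏ j ∈ S, φ j) * ∏ j ∈ Sᶜ, (1 - φ j)

/-- Kullback–Leibler divergence, with the convention `0 · log 0 = 0`. -/
noncomputable def klDiv {p : ℕ} (q π : Finset (Fin p) → ℝ) : ℝ :=
  ∑ S : Finset (Fin p), q S * Real.log (q S / π S)

lemma sum_bernoulliMass {p : ℕ} (φ : Fin p → ℝ) :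
    ∑ S : Finset (Fin p), bernoulliMass φ S = 1 := by
  have h := prod_add φ (fun j => 1 - φ j) (univ : Finset (Fin p))
  simp only [add_sub_cancel, prod_const_one, powerset_univ] at h
  rw [h]
  exact sum_congr rfl fun S _ => by rw [bernoulliMass, compl_eq_univ_sdiff]

lemma bernoulliMass_nonneg {p : ℕ} {φ : Fin p → ℝ} (hφ : ∀ j, φ j ∈ Set.Icc (0 : ℝ) 1)
    (S : Finset (Fin p)) : 0 ≤ bernoulliMass φ S :=
  mul_nonneg (prod_nonneg fun j _ => (hφ j).1) (prod_nonneg fun j _ => sub_nonneg.2 (hφ j).2)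

lemma bernoulliMass_indicator {p : ℕ} (S₀ S : Finset (Fin p)) :
    bernoulliMass (fun j => if j ∈ S₀ then 1 else 0) S = if S = S₀ then 1 else 0 := by
  have hcompl : ∀ j, (1 : ℝ) - (if j ∈ S₀ then 1 else 0) = if j ∉ S₀ then 1 else 0 := by
    intro j; split_ifs <;> simp_all
  simp only [bernoulliMass, hcompl, prod_boole, ← ite_and, mul_ite, mul_one, mul_zero]
  congr 1
  simp only [mem_compl, ← subset_iff, not_imp_not]
  exact propext ⟨fun h => subset_antisymm h.2 h.1, fun h => ⟨h.ge, h.le⟩⟩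

section

open Real

lemma klDiv_ite_eq_neg_log {p : ℕ} (S₀ : Finset (Fin p)) (w : Finset (Fin p) → ℝ) :
    klDiv (fun S => if S = S₀ then 1 else 0) w = -log (w S₀) := by
  rw [klDiv, sum_eq_single S₀ (fun S _ hS => by simp [hS]) (by simp)]
  simp [log_inv]

/-- The log-sum inequality. -/
lemma sum_mul_log_div_sum_le {ι : Type*} (s : Finset ι) {q w : ι → ℝ}
    (hq : ∀ i ∈ s, 0 ≤ q i) (hw : ∀ i ∈ s, 0 < w i) :
    (∑ i ∈ s, q i) * log ((∑ i ∈ s, q i) / ∑ i ∈ s, w i) ≤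
      ∑ i ∈ s, q i * log (q i / w i) := by
  rcases s.eq_empty_or_nonempty with rfl | hs
  · simp
  have hW : 0 < ∑ i ∈ s, w i := sum_pos hw hs
  have hjensen := convexOn_mul_log.map_centerMass_le (t := s) (p := fun i => q i / w i)
    (fun i hi => (hw i hi).le) hW (fun i hi => Set.mem_Ici.2 (div_nonneg (hq i hi) (hw i hi).le))
  have hcancel : ∀ i ∈ s, w i * (q i / w i) = q i := fun i hi => mul_div_cancel₀ _ (hw i hi).ne'
  have hcancel_log : ∀ i ∈ s, w i * (q i / w i * log (q i / w i)) = q i * log (q i / w i) :=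
    fun i hi => by rw [← mul_assoc, hcancel i hi]
  simp only [centerMass, smul_eq_mul, Function.comp_apply, sum_congr rfl hcancel,
    sum_congr rfl hcancel_log, mul_assoc] at hjensen
  rw [div_eq_inv_mul]
  exact (mul_le_mul_iff_of_pos_left (inv_pos.2 hW)).1 hjensen

lemma mul_log_div_add_mul_log_div_le_klDiv {p : ℕ} {q w : Finset (Fin p) → ℝ}
    (hq : ∀ S, 0 ≤ q S) (hqsum : ∑ S, q S = 1) (hw : ∀ S, 0 < w S) (hwsum : ∑ S, w S = 1)
    (S₀ : Finset (Fin p)) :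
    q S₀ * log (q S₀ / w S₀) + (1 - q S₀) * log ((1 - q S₀) / (1 - w S₀)) ≤ klDiv q w := by
  have hrest : ∀ f : Finset (Fin p) → ℝ, ∑ S, f S = 1 → ∑ S ∈ univ.erase S₀, f S = 1 - f S₀ :=
    fun f hf => by rw [← hf, ← add_sum_erase _ _ (mem_univ S₀), add_sub_cancel_left]
  rw [klDiv, ← add_sum_erase _ _ (mem_univ S₀), ← hrest q hqsum, ← hrest w hwsum]
  exact add_le_add_right (sum_mul_log_div_sum_le _ (fun S _ => hq S) fun S _ => hw S) _

lemma neg_one_sub_mul_log_le_mul_log_div {x y : ℝ} (hx : 0 ≤ x) (hy : y ≠ 0) :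
    -1 - x * log y ≤ x * log (x / y) := by
  rcases hx.eq_or_lt with rfl | hx
  · simp
  rw [log_div hx.ne' hy, mul_sub]
  linarith [self_sub_one_le_mul_log hx.le]

lemma one_sub_mul_neg_log_one_sub_le {a b K : ℝ} (ha₀ : 0 ≤ a) (ha₁ : a ≤ 1) (hb₀ : 0 < b)
    (hb₁ : b < 1) (h : a * log (a / b) + (1 - a) * log ((1 - a) / (1 - b)) ≤ K) :
    (1 - a) * -log (1 - b) ≤ K + 2 := by
  have hlog_b : a * log b ≤ 0 := mul_nonpos_of_nonneg_of_nonpos ha₀ (log_nonpos hb₀.le hb₁.le)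
  linarith [neg_one_sub_mul_log_le_mul_log_div ha₀ hb₀.ne',
    neg_one_sub_mul_log_le_mul_log_div (sub_nonneg.2 ha₁) (sub_ne_zero.2 hb₁.ne')]

end

lemma apply_eq_one_of_apply_eq_one {α : Type*} [Fintype α] {f g : α → ℝ} (hf : ∀ x, 0 < f x)
    (hfsum : ∑ x, f x = 1) (hgsum : ∑ x, g x = 1) {x₀ : α} (hx₀ : f x₀ = 1) : g x₀ = 1 := by
  have hsingle : ∀ x, x = x₀ := by
    by_contra! ⟨x, hx⟩
    have hpair : f x₀ + f x ≤ ∑ y, f y := by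
      classical
      rw [← sum_pair hx.symm]
      exact sum_le_univ_sum_of_nonneg fun y => (hf y).le
    linarith [hf x]
  rw [← hgsum, Fintype.sum_eq_single x₀ fun x hx => absurd (hsingle x) hx]

lemma one_sub_bernoulliMass_mul_neg_log_le {p : ℕ} {π : Finset (Fin p) → ℝ}
    (hπsum : ∑ S, π S = 1) (hπpos : ∀ S, 0 < π S) {φ : Fin p → ℝ}
    (hφ : ∀ j, φ j ∈ Set.Icc (0 : ℝ) 1)
    (hmin : ∀ ψ : Fin p → ℝ, (∀ j, ψ j ∈ Set.Icc (0 : ℝ) 1) →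
      klDiv (bernoulliMass φ) π ≤ klDiv (bernoulliMass ψ) π)
    {S₀ : Finset (Fin p)} (hS₀ : π S₀ < 1) :
    (1 - bernoulliMass φ S₀) * -Real.log (1 - π S₀) ≤ 2 - Real.log (π S₀) := by
  have hpoint : klDiv (bernoulliMass φ) π ≤ -Real.log (π S₀) := by
    have h := hmin (fun j => if j ∈ S₀ then 1 else 0) fun j => by split_ifs <;> simp
    rwa [funext (bernoulliMass_indicator S₀), klDiv_ite_eq_neg_log] at h
  have hbinary := mul_log_div_add_mul_log_div_le_klDiv (bernoulliMass_nonneg hφ)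
    (sum_bernoulliMass φ) hπpos hπsum S₀
  have ha₁ : bernoulliMass φ S₀ ≤ 1 := sum_bernoulliMass φ ▸
    single_le_sum (fun S _ => bernoulliMass_nonneg hφ S) (mem_univ S₀)
  linarith [one_sub_mul_neg_log_one_sub_le (bernoulliMass_nonneg hφ S₀) ha₁ (hπpos S₀) hS₀
    (hbinary.trans hpoint)]

lemma abs_bernoulliMass_sub_one_lt {p : ℕ} {π : Finset (Fin p) → ℝ}
    (hπsum : ∑ S, π S = 1) (hπpos : ∀ S, 0 < π S) {φ : Fin p → ℝ}
    (hφ : ∀ j, φ j ∈ Set.Icc (0 : ℝ) 1)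
    (hmin : ∀ ψ : Fin p → ℝ, (∀ j, ψ j ∈ Set.Icc (0 : ℝ) 1) →
      klDiv (bernoulliMass φ) π ≤ klDiv (bernoulliMass ψ) π)
    {S₀ : Finset (Fin p)} {δ : ℝ} (hδ : 0 < δ)
    (hπS₀ : |π S₀ - 1| < min (1 / 2) (Real.exp (-3 / δ))) :
    |bernoulliMass φ S₀ - 1| < δ := by
  have hb_le : π S₀ ≤ 1 := hπsum ▸ single_le_sum (fun S _ => (hπpos S).le) (mem_univ S₀)
  have ha₁ : bernoulliMass φ S₀ ≤ 1 := sum_bernoulliMass φ ▸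
    single_le_sum (fun S _ => bernoulliMass_nonneg hφ S) (mem_univ S₀)
  rcases hb_le.eq_or_lt with hb₁ | hb₁
  · simp [apply_eq_one_of_apply_eq_one hπpos hπsum (sum_bernoulliMass φ) hb₁, hδ]
  rw [abs_sub_comm, abs_of_pos (sub_pos.2 hb₁), lt_min_iff] at hπS₀
  rw [abs_sub_comm, abs_of_nonneg (sub_nonneg.2 ha₁)]
  -- `π S₀ > 1/2` makes the bound of `one_sub_bernoulliMass_mul_neg_log_le` at most `3`, and
  -- `1 - π S₀ < exp (-3/δ)` makes its left factor `-log (1 - π S₀)` exceed `3/δ`.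
  have hlog_b : -Real.log (π S₀) ≤ 1 := by
    have hinv : (π S₀)⁻¹ ≤ 2 := by rw [inv_le_comm₀ (hπpos S₀) two_pos]; linarith
    linarith [Real.one_sub_inv_le_log_of_pos (hπpos S₀)]
  have hlog_gap : 3 / δ < -Real.log (1 - π S₀) := by
    have hlog := Real.log_lt_log (sub_pos.2 hb₁) hπS₀.2
    rw [Real.log_exp] at hlog
    linarith [neg_div δ 3]
  by_contra! hge
  have hbound := one_sub_bernoulliMass_mul_neg_log_le hπsum hπpos hφ hmin hb₁
  have hlarge : 3 < (1 - bernoulliMass φ S₀) * -Real.log (1 - π S₀) :=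
    calc (3 : ℝ) = δ * (3 / δ) := by field_simp
      _ < δ * -Real.log (1 - π S₀) := mul_lt_mul_of_pos_left hlog_gap hδ
      _ ≤ _ := mul_le_mul_of_nonneg_right hge (by linarith [div_pos three_pos hδ])
  linarith

lemma MeasureTheory.TendstoInMeasure.of_dist_lt {ι Ω E F : Type*} [MeasurableSpace Ω]
    {μ : Measure Ω} [PseudoMetricSpace E] [PseudoMetricSpace F] {l : Filter ι}
    {f : ι → Ω → E} {g : ι → Ω → F} {x : E} {y : F}
    (hf : TendstoInMeasure μ f l fun _ => x)
    (h : ∀ δ > 0, ∃ ε > 0, ∀ i ω, dist (f i ω) x < ε → dist (g i ω) y < δ) :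
    TendstoInMeasure μ g l fun _ => y := by
  rw [tendstoInMeasure_iff_dist] at hf ⊢
  intro δ hδ
  obtain ⟨ε, hε, hεδ⟩ := h δ hδ
  refine tendsto_of_tendsto_of_tendsto_of_le_of_le tendsto_const_nhds (hf ε hε)
    (fun _ => zero_le) fun i => measure_mono fun ω hω => ?_
  by_contra hlt
  exact (not_lt.2 hω) (hεδ i ω (not_le.1 hlt))

theorem stmt_4_general {Ω : Type*} [MeasurableSpace Ω] (μ : Measure Ω)
    (p : ℕ → ℕ) (Sstar : ∀ n : ℕ, Finset (Fin (p n)))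
    (π : ∀ n : ℕ, Ω → Finset (Fin (p n)) → ℝ)
    (hπsum : ∀ n ω, ∑ S : Finset (Fin (p n)), π n ω S = 1)
    (hπpos : ∀ n ω S, 0 < π n ω S)
    (φhat : ∀ n : ℕ, Ω → Fin (p n) → ℝ)
    (hφhat : ∀ n ω j, φhat n ω j ∈ Set.Icc (0 : ℝ) 1)
    (hmin : ∀ n ω (φ : Fin (p n) → ℝ), (∀ j, φ j ∈ Set.Icc (0 : ℝ) 1) →
      klDiv (bernoulliMass (φhat n ω)) (π n ω) ≤ klDiv (bernoulliMass φ) (π n ω))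
    (hconv : ∀ δ : ℝ, 0 < δ →
      Tendsto (fun n => μ {ω | δ ≤ |π n ω (Sstar n) - 1|}) atTop (nhds 0)) :
    ∀ δ : ℝ, 0 < δ →
      Tendsto (fun n => μ {ω | δ ≤ |bernoulliMass (φhat n ω) (Sstar n) - 1|})
        atTop (nhds 0) := by
  have hπ : TendstoInMeasure μ (fun n ω => π n ω (Sstar n)) atTop fun _ => 1 := by
    simpa only [tendstoInMeasure_iff_dist, Real.dist_eq] using hconv
  have hq := hπ.of_dist_lt (g := fun n ω => bernoulliMass (φhat n ω) (Sstar n)) (y := 1)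
    fun δ hδ => ⟨_, lt_min one_half_pos (Real.exp_pos _), fun n ω => by
      simpa only [Real.dist_eq] using
        abs_bernoulliMass_sub_one_lt (hπsum n ω) (hπpos n ω) (hφhat n ω) (hmin n ω) hδ⟩
  simpa only [tendstoInMeasure_iff_dist, Real.dist_eq] using hq

theorem stmt_4 {Ω : Type*} [MeasurableSpace Ω] (μ : Measure Ω) [IsProbabilityMeasure μ]
    (p : ℕ → ℕ) (Sstar : ∀ n : ℕ, Finset (Fin (p n)))
    (π : ∀ n : ℕ, Ω → Finset (Fin (p n)) → ℝ)
    (hπsum : ∀ n ω, ∑ S : Finset (Fin (p n)), π n ω S = 1)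
    (hπpos : ∀ n ω S, 0 < π n ω S)
    (hπmeas : ∀ n, Measurable fun ω => π n ω (Sstar n))
    (φhat : ∀ n : ℕ, Ω → Fin (p n) → ℝ)
    (hφhat : ∀ n ω j, φhat n ω j ∈ Set.Icc (0 : ℝ) 1)
    (hmin : ∀ n ω (φ : Fin (p n) → ℝ), (∀ j, φ j ∈ Set.Icc (0 : ℝ) 1) →
      klDiv (bernoulliMass (φhat n ω)) (π n ω) ≤ klDiv (bernoulliMass φ) (π n ω))
    (hqmeas : ∀ n, Measurable fun ω => bernoulliMass (φhat n ω) (Sstar n))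
    (hconv : ∀ δ : ℝ, 0 < δ →
      Tendsto (fun n => μ {ω | δ ≤ |π n ω (Sstar n) - 1|}) atTop (nhds 0)) :
    ∀ δ : ℝ, 0 < δ →
      Tendsto (fun n => μ {ω | δ ≤ |bernoulliMass (φhat n ω) (Sstar n) - 1|})
        atTop (nhds 0) :=
  stmt_4_general μ p Sstar π hπsum hπpos φhat hφhat hmin hconv
end

section
/- (Lower bound on the logistic log-likelihood, Equation (6) of the paper.) Let n, p ∈ ℕ, let X ∈ ℝ^{n×p}, y ∈ {0,1}^n, β ∈ ℝ^p, let S be a configuration of {0,...,p−1}, and let η ∈ ℝ^n with η_i ≠ 0 for all i. Set M_i(S, β) = Σ_{j∈S} x_{ij} β_j. Then Σ_{i=1}^n [ y_i M_i(S,β) − log(1 + exp(M_i(S,β))) ] ≥ Σ_{i=1}^n [ log( exp(η_i)/(1 + exp(η_i)) ) − η_i/2 + (y_i − 1/2) M_i(S,β) − ( tanh(η_i/2)/(4η_i) ) · ( M_i(S,β)² − η_i² ) ]. -/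
/-!
This is the Jaakkola–Jordan bound. Since `log (1 + exp x) = x / 2 + log 2 + log (cosh (x / 2))`,
it suffices to bound `log ∘ cosh` above by a quadratic touching it at `b = η / 2`. Because
`tanh u / u` decreases on `(0, ∞)`, the function `x ↦ (tanh b / b) x² / 2 - log (cosh x)` decreases
on `[0, |b|]` and increases on `[|b|, ∞)`, so it is minimal at `|b|`; equivalently, `log (cosh √t)`
is concave in `t` and lies below its tangent line at `t = b²`.
-/

open Set

namespace Real

theorem hasDerivAt_tanh (x : ℝ) : HasDerivAt tanh (1 / cosh x ^ 2) x := by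
  have hquot := (hasDerivAt_sinh x).div (hasDerivAt_cosh x) (cosh_pos x).ne'
  rw [show cosh x * cosh x - sinh x * sinh x = 1 by nlinarith [cosh_sq x]] at hquot
  exact hquot.congr_of_eventuallyEq (.of_forall fun t => tanh_eq_sinh_div_cosh t)

theorem hasDerivAt_log_cosh (x : ℝ) : HasDerivAt (fun t => log (cosh t)) (tanh x) x := by
  simpa only [← tanh_eq_sinh_div_cosh] using (hasDerivAt_cosh x).log (cosh_pos x).ne'

theorem self_le_sinh_mul_cosh {x : ℝ} (hx : 0 ≤ x) : x ≤ sinh x * cosh x := by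
  have h := self_le_sinh_iff.2 (by linarith : 0 ≤ 2 * x)
  rw [sinh_two_mul] at h
  linarith

theorem antitoneOn_tanh_div_self : AntitoneOn (fun u => tanh u / u) (Ioi 0) := by
  have hderiv : ∀ u ∈ Ioi (0 : ℝ),
      HasDerivAt (fun u => tanh u / u) ((1 / cosh u ^ 2 * u - tanh u * 1) / u ^ 2) u :=
    fun u hu => (hasDerivAt_tanh u).div (hasDerivAt_id u) (ne_of_gt hu)
  refine antitoneOn_of_deriv_nonpos (convex_Ioi 0)
    (fun u hu => (hderiv u hu).continuousAt.continuousWithinAt)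
    (fun u hu => (hderiv u (interior_subset hu)).differentiableAt.differentiableWithinAt) ?_
  intro u hu
  rw [interior_Ioi] at hu
  rw [(hderiv u hu).deriv]
  refine div_nonpos_of_nonpos_of_nonneg ?_ (sq_nonneg u)
  have hcosh : 0 < cosh u ^ 2 := by positivity
  have : u / cosh u ^ 2 ≤ tanh u := by
    rw [tanh_eq_sinh_div_cosh, div_le_div_iff₀ hcosh (cosh_pos u)]
    nlinarith [self_le_sinh_mul_cosh (le_of_lt hu), cosh_pos u]
  rw [one_div_mul_eq_div]
  linarith

theorem log_cosh_sub_le_of_pos {a b : ℝ} (ha : 0 ≤ a) (hb : 0 < b) :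
    log (cosh a) - log (cosh b) ≤ tanh b / (2 * b) * (a ^ 2 - b ^ 2) := by
  set k := tanh b / b
  set H : ℝ → ℝ := fun x => k * x ^ 2 / 2 - log (cosh x)
  have hderiv : ∀ x, HasDerivAt H (k * x - tanh x) x := fun x =>
    ((((hasDerivAt_pow 2 x).const_mul k).div_const 2).sub (hasDerivAt_log_cosh x)).congr_deriv
      (by ring)
  have hcont : Continuous H := continuous_iff_continuousAt.2 fun x => (hderiv x).continuousAt
  have hdiff : Differentiable ℝ H := fun x => (hderiv x).differentiableAt
  have hHb : H b ≤ H a := by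
    rcases le_total a b with hab | hba
    · refine antitoneOn_of_deriv_nonpos (convex_Icc 0 b) hcont.continuousOn
        hdiff.differentiableOn ?_ ⟨ha, hab⟩ ⟨hb.le, le_rfl⟩ hab
      intro x hx
      rw [interior_Icc] at hx
      have hk : k ≤ tanh x / x := antitoneOn_tanh_div_self hx.1 hb hx.2.le
      rw [(hderiv x).deriv, sub_nonpos, ← le_div_iff₀ hx.1]
      exact hk
    · refine monotoneOn_of_deriv_nonneg (convex_Ici b) hcont.continuousOn
        hdiff.differentiableOn ?_ self_mem_Ici hba hba
      intro x hx
      rw [interior_Ici] at hx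
      have hk : tanh x / x ≤ k := antitoneOn_tanh_div_self hb (hb.trans hx) hx.le
      rw [(hderiv x).deriv, sub_nonneg, ← div_le_iff₀ (hb.trans hx)]
      exact hk
  have hkb : tanh b / (2 * b) * (a ^ 2 - b ^ 2) = k * a ^ 2 / 2 - k * b ^ 2 / 2 := by
    simp only [k]
    field_simp
  simp only [H] at hHb
  linarith

theorem log_cosh_sub_le {a b : ℝ} (hb : b ≠ 0) :
    log (cosh a) - log (cosh b) ≤ tanh b / (2 * b) * (a ^ 2 - b ^ 2) := by
  have heven : tanh |b| / (2 * |b|) = tanh b / (2 * b) := by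
    rcases abs_choice b with h | h <;> rw [h]
    rw [tanh_neg, mul_neg, neg_div_neg_eq]
  have h := log_cosh_sub_le_of_pos (abs_nonneg a) (abs_pos.2 hb)
  rwa [cosh_abs, cosh_abs, sq_abs, sq_abs, heven] at h

theorem log_one_add_exp_eq (x : ℝ) :
    log (1 + exp x) = x / 2 + log 2 + log (cosh (x / 2)) := by
  have hfactor : 1 + exp x = exp (x / 2) * (2 * cosh (x / 2)) := by
    rw [cosh_eq, mul_div_cancel₀ _ two_ne_zero, mul_add, ← exp_add, ← exp_add, add_halves,
      add_neg_cancel, exp_zero, add_comm]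
  rw [hfactor, log_mul (exp_ne_zero _) (by positivity), log_exp,
    log_mul two_ne_zero (cosh_pos _).ne']
  ring

theorem log_one_add_exp_le {m η : ℝ} (hη : η ≠ 0) :
    log (1 + exp m) ≤
      log (1 + exp η) + (m - η) / 2 + tanh (η / 2) / (4 * η) * (m ^ 2 - η ^ 2) := by
  have h := log_cosh_sub_le (a := m / 2) (div_ne_zero hη two_ne_zero)
  have hscale : tanh (η / 2) / (2 * (η / 2)) * ((m / 2) ^ 2 - (η / 2) ^ 2)
      = tanh (η / 2) / (4 * η) * (m ^ 2 - η ^ 2) := by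
    field_simp
    ring
  rw [log_one_add_exp_eq m, log_one_add_exp_eq η]
  linarith

end Real

theorem stmt_10_general (n : ℕ) (y : Fin n → ℝ)
    (η : Fin n → ℝ) (hη : ∀ i, η i ≠ 0)
    (M : Fin n → ℝ) :
    ∑ i : Fin n, (y i * M i - Real.log (1 + Real.exp (M i)))
      ≥ ∑ i : Fin n,
          (Real.log (Real.exp (η i) / (1 + Real.exp (η i))) - η i / 2
            + (y i - 1 / 2) * M i
            - (Real.tanh (η i / 2) / (4 * η i)) * ((M i) ^ 2 - (η i) ^ 2)) := by
  refine Finset.sum_le_sum fun i _ => ?_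
  rw [Real.log_div (Real.exp_ne_zero _) (by positivity), Real.log_exp]
  linarith [Real.log_one_add_exp_le (m := M i) (hη i)]

theorem stmt_10 (n p : ℕ) (X : Fin n → Fin p → ℝ) (y : Fin n → ℝ)
    (hy : ∀ i, y i = 0 ∨ y i = 1) (β : Fin p → ℝ) (S : Finset (Fin p))
    (η : Fin n → ℝ) (hη : ∀ i, η i ≠ 0)
    (M : Fin n → ℝ) (hM : ∀ i, M i = ∑ j ∈ S, X i j * β j) :
    ∑ i : Fin n, (y i * M i - Real.log (1 + Real.exp (M i)))
      ≥ ∑ i : Fin n,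
          (Real.log (Real.exp (η i) / (1 + Real.exp (η i))) - η i / 2
            + (y i - 1 / 2) * M i
            - (Real.tanh (η i / 2) / (4 * η i)) * ((M i) ^ 2 - (η i) ^ 2)) :=
  stmt_10_general n y η hη M
end
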